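/- arXiv:1910.02568 — 3 statements merged into one kernel-verified Lean document; each statement's English description precedes it below -/
import Mathlib

section
/- Let λ ∈ Γ_k, the cone {λ ∈ ℝⁿ : σ_j(λ) > 0 for all 1 ≤ j ≤ k}. For integers k > l ≥ 0, r > s ≥ 0 with k ≥ r and l ≥ s, one has [ (σ_k(λ)/C(n,k)) / (σ_l(λ)/C(n,l)) ]^{1/(k−l)} ≤ [ (σ_r(λ)/C(n,r)) / (σ_s(λ)/C(n,s)) ]^{1/(r−s)}. -/
/-!
Newton's inequalities `E_j E_{j+2} ≤ E_{j+1}²` for the normalized means `E_j = σ_j / C(n, j)` of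
real numbers hold with no positivity assumption. Differentiating `∏ (X - xᵢ)` preserves the means
(the roots stay real by Rolle), which reduces to `n = j + 2`; replacing the `xᵢ` by their reciprocals
then reduces to `j = 0`, which is Cauchy–Schwarz. On `Γ_k` the means `E_0, …, E_k` are positive, so
`j ↦ log E_j` is concave on `0, …, k`; the two sides of the inequality are exponentials of chord
slopes of this sequence, and chord slopes of a concave sequence decrease in both endpoints.
-/

open Finset

/-- The k-th elementary symmetric polynomial of x : Fin n -> R. -/
noncomputable def esymm (n k : ℕ) (x : Fin n → ℝ) : ℝ :=
  ∑ s ∈ Finset.univ.powersetCard k, ∏ i ∈ s, x i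

/-- The Garding cone Gamma_k. -/
def Gamma (n k : ℕ) : Set (Fin n → ℝ) :=
  {x | ∀ j, 1 ≤ j → j ≤ k → 0 < esymm n j x}

open Polynomial

namespace Multiset

section CommSemiring

variable {R : Type*} [CommSemiring R]

@[simp]
lemma esymm_zero (s : Multiset R) : s.esymm 0 = 1 := by
  simp [esymm]

lemma esymm_one (s : Multiset R) : s.esymm 1 = s.sum := by
  simp [esymm, powersetCard_one, map_map]

lemma esymm_cons_succ (a : R) (s : Multiset R) (k : ℕ) :
    (a ::ₘ s).esymm (k + 1) = s.esymm (k + 1) + a * s.esymm k := by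
  simp only [esymm, powersetCard_cons, map_add, sum_add, map_map, Function.comp_def, prod_cons,
    sum_map_mul_left]

lemma esymm_eq_zero_of_card_lt {s : Multiset R} {k : ℕ} (h : card s < k) : s.esymm k = 0 := by
  simp [esymm, powersetCard_eq_empty _ h]

lemma esymm_card (s : Multiset R) : s.esymm (card s) = s.prod := by
  induction s using Multiset.induction_on with
  | empty => simp
  | cons a s ih =>
    rw [card_cons, esymm_cons_succ, esymm_eq_zero_of_card_lt (Nat.lt_succ_self _), ih, prod_cons,
      zero_add]

end CommSemiring

lemma sq_sum_eq {R : Type*} [CommRing R] (s : Multiset R) :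
    s.sum ^ 2 = (s.map (· ^ 2)).sum + 2 * s.esymm 2 := by
  induction s using Multiset.induction_on with
  | empty => simp [esymm_eq_zero_of_card_lt (show card (0 : Multiset R) < 2 by simp)]
  | cons a s ih =>
    rw [sum_cons, map_cons, sum_cons, esymm_cons_succ, esymm_one]
    linear_combination ih

lemma sq_sum_le_card_mul_sum_sq {α : Type*} [Semiring α] [LinearOrder α] [IsStrictOrderedRing α]
    [ExistsAddOfLE α] (s : Multiset α) : s.sum ^ 2 ≤ card s * (s.map (· ^ 2)).sum := by
  induction s using Quotient.inductionOn with
  | h l =>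
    have h := _root_.sq_sum_le_card_mul_sum_sq (s := Finset.univ) (f := l.get)
    have e : (List.ofFn fun i => l.get i ^ 2) = l.map (· ^ 2) := by
      rw [← List.ofFn_get (l.map (· ^ 2))]
      simp
    rw [← List.sum_ofFn, ← List.sum_ofFn, List.ofFn_get, e] at h
    simpa using h

lemma esymm_map_inv_mul_prod {K : Type*} [Field K] {s : Multiset K} (h0 : (0 : K) ∉ s)
    {i j : ℕ} (hij : i + j = card s) : (s.map (·⁻¹)).esymm i * s.prod = s.esymm j := by
  induction s using Multiset.induction_on generalizing i j with
  | empty =>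
    obtain ⟨rfl, rfl⟩ : i = 0 ∧ j = 0 := by simpa using hij
    simp
  | cons a s ih =>
    have ha : a ≠ 0 := fun h => h0 (h ▸ mem_cons_self a s)
    have h0s : (0 : K) ∉ s := fun h => h0 (mem_cons_of_mem h)
    rw [card_cons] at hij
    cases i with
    | zero => rw [esymm_zero, one_mul, ← esymm_card, card_cons, ← hij, zero_add]
    | succ i =>
      rw [map_cons, esymm_cons_succ, prod_cons]
      cases j with
      | zero =>
        rw [esymm_eq_zero_of_card_lt (by simp; omega), zero_add, mul_mul_mul_comm,
          inv_mul_cancel₀ ha, one_mul, ih h0s (j := 0) (by omega), esymm_zero, esymm_zero]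
      | succ j =>
        rw [esymm_cons_succ, ← ih h0s (i := i + 1) (j := j) (by omega),
          ← ih h0s (i := i) (j := j + 1) (by omega), add_mul, mul_mul_mul_comm a⁻¹,
          inv_mul_cancel₀ ha]
        ring

noncomputable def esymmMean {K : Type*} [Field K] (s : Multiset K) (j : ℕ) : K :=
  s.esymm j / (card s).choose j

section Field

variable {K : Type*} [Field K]

@[simp]
lemma esymmMean_zero (s : Multiset K) : s.esymmMean 0 = 1 := by
  simp [esymmMean]

lemma esymmMean_eq_zero_of_card_lt {s : Multiset K} {j : ℕ} (h : card s < j) :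
    s.esymmMean j = 0 := by
  rw [esymmMean, esymm_eq_zero_of_card_lt h, zero_div]

lemma esymmMean_map_inv_mul_prod {s : Multiset K} (h0 : (0 : K) ∉ s) {i j : ℕ}
    (hij : i + j = card s) : (s.map (·⁻¹)).esymmMean i * s.prod = s.esymmMean j := by
  rw [esymmMean, esymmMean, card_map, ← hij, Nat.choose_symm_add, div_mul_eq_mul_div,
    esymm_map_inv_mul_prod h0 hij]

end Field

/-- By Rolle's theorem `P'` has at least `card s - 1` real roots, so `P'` splits over `ℝ`. -/
lemma card_roots_derivative_prod_X_sub_C (s : Multiset ℝ) :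
    card (derivative (s.map (X - C ·)).prod).roots = card s - 1 := by
  have h := card_roots_le_derivative (s.map (X - C ·)).prod
  have h' := (card_roots' (derivative (s.map (X - C ·)).prod)).trans (natDegree_derivative_le _)
  rw [roots_multiset_prod_X_sub_C] at h
  rw [natDegree_multiset_prod_X_sub_C_eq_card] at h'
  omega

/-- Comparing the coefficients of `P'` with those of `P = ∏ (X - a)`, both by Vieta. -/
lemma card_mul_esymm_derivative_roots {s : Multiset ℝ} {j : ℕ} (hj : j < card s) :
    (card s : ℝ) * (derivative (s.map (X - C ·)).prod).roots.esymm j =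
      ((card s - j : ℕ) : ℝ) * s.esymm j := by
  set P := (s.map (X - C ·)).prod
  have hmonic : P.Monic := monic_multiset_prod_of_monic _ _ fun a _ => monic_X_sub_C a
  have hP : P.natDegree = card s := natDegree_multiset_prod_X_sub_C_eq_card s
  have hP' : (derivative P).natDegree = card s - 1 := by
    have h₁ : card (derivative P).roots = card s - 1 := card_roots_derivative_prod_X_sub_C s
    have h₂ := card_roots' (derivative P)
    have h₃ := natDegree_derivative_le P
    rw [hP] at h₃
    omega
  have hlead : (derivative P).leadingCoeff = card s := by
    rw [leadingCoeff_derivative, hmonic.leadingCoeff, hP, one_mul]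
  have h := coeff_derivative P (card s - 1 - j)
  rw [coeff_eq_esymm_roots_of_card (by rw [card_roots_derivative_prod_X_sub_C, hP']) (by omega),
    coeff_eq_esymm_roots_of_card (by rw [roots_multiset_prod_X_sub_C, hP]) (by omega), hlead, hP,
    hP', roots_multiset_prod_X_sub_C, hmonic.leadingCoeff] at h
  have e₁ : card s - 1 - (card s - 1 - j) = j := by omega
  have e₂ : card s - (card s - 1 - j + 1) = j := by omega
  have e₃ : ((card s - 1 - j : ℕ) : ℝ) + 1 = ((card s - j : ℕ) : ℝ) := by norm_cast; omega
  rw [e₁, e₂, e₃] at h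
  refine mul_left_cancel₀ (pow_ne_zero j (neg_ne_zero.mpr one_ne_zero)) ?_
  linear_combination h

lemma exists_card_eq_esymmMean_eq {s : Multiset ℝ} {m : ℕ} (hs : card s = m + 1) :
    ∃ t : Multiset ℝ, card t = m ∧ ∀ j ≤ m, t.esymmMean j = s.esymmMean j := by
  refine ⟨(derivative (s.map (X - C ·)).prod).roots,
    by rw [card_roots_derivative_prod_X_sub_C, hs, Nat.add_sub_cancel], fun j hj => ?_⟩
  have h := card_mul_esymm_derivative_roots (s := s) (j := j) (by omega)
  have hc : (m.choose j : ℝ) * (m + 1) = ((m + 1).choose j) * ((m + 1 - j : ℕ) : ℝ) := by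
    exact_mod_cast Nat.choose_mul_succ_eq m j
  rw [hs] at h
  push_cast at h
  rw [esymmMean, esymmMean, card_roots_derivative_prod_X_sub_C, hs, Nat.add_sub_cancel,
    div_eq_div_iff (by exact_mod_cast (Nat.choose_pos hj).ne')
      (by exact_mod_cast (Nat.choose_pos (by omega : j ≤ m + 1)).ne')]
  refine mul_left_cancel₀ (show (m : ℝ) + 1 ≠ 0 by positivity) ?_
  linear_combination ((m + 1).choose j : ℝ) * h - s.esymm j * hc

lemma esymmMean_two_le_sq (s : Multiset ℝ) : s.esymmMean 2 ≤ s.esymmMean 1 ^ 2 := by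
  obtain hs | hs := lt_or_ge (card s) 2
  · rw [esymmMean_eq_zero_of_card_lt hs]
    positivity
  have hm : (2 : ℝ) ≤ card s := by exact_mod_cast hs
  have hCS := mul_le_mul_of_nonneg_left (sq_sum_le_card_mul_sum_sq s) (Nat.cast_nonneg (card s))
  rw [esymmMean, esymmMean, Nat.cast_choose_two, Nat.choose_one_right, esymm_one, div_pow,
    div_le_div_iff₀ (by nlinarith) (by positivity)]
  nlinarith [sq_sum_eq s]

/-- In the top case `card s = j + 2`, passing to the reciprocals reduces Newton's inequality to
`esymmMean_two_le_sq`. -/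
lemma esymmMean_mul_esymmMean_le_sq_of_card_eq {s : Multiset ℝ} {j : ℕ} (hs : card s = j + 2) :
    s.esymmMean j * s.esymmMean (j + 2) ≤ s.esymmMean (j + 1) ^ 2 := by
  by_cases h0 : (0 : ℝ) ∈ s
  · have htop : s.esymmMean (j + 2) = 0 := by
      rw [esymmMean, ← hs, esymm_card, prod_eq_zero h0, zero_div]
    rw [htop, mul_zero]
    positivity
  have e₀ := esymmMean_map_inv_mul_prod h0 (i := 0) (j := j + 2) (by omega)
  have e₁ := esymmMean_map_inv_mul_prod h0 (i := 1) (j := j + 1) (by omega)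
  have e₂ := esymmMean_map_inv_mul_prod h0 (i := 2) (j := j) (by omega)
  rw [esymmMean_zero, one_mul] at e₀
  rw [← e₀, ← e₁, ← e₂]
  nlinarith [esymmMean_two_le_sq (s.map (·⁻¹)), sq_nonneg s.prod]

theorem esymmMean_mul_esymmMean_le_sq (s : Multiset ℝ) (j : ℕ) :
    s.esymmMean j * s.esymmMean (j + 2) ≤ s.esymmMean (j + 1) ^ 2 := by
  obtain hs | hs := lt_or_ge (card s) (j + 2)
  · rw [esymmMean_eq_zero_of_card_lt hs, mul_zero]
    positivity
  induction hn : card s generalizing s with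
  | zero => omega
  | succ m ih =>
    obtain hm | hm := eq_or_lt_of_le hs
    · exact esymmMean_mul_esymmMean_le_sq_of_card_eq hm.symm
    obtain ⟨t, ht, hmean⟩ := exists_card_eq_esymmMean_eq hn
    rw [← hmean j (by omega), ← hmean (j + 1) (by omega), ← hmean (j + 2) (by omega)]
    exact ih t (by omega) ht

end Multiset

section ConcaveSequence

variable {a : ℕ → ℝ} {k : ℕ}

lemma sub_succ_le_sub_succ_of_concave (ha : ∀ i, i + 2 ≤ k → a i + a (i + 2) ≤ 2 * a (i + 1))
    {i j : ℕ} (hij : i ≤ j) (hjk : j < k) : a (j + 1) - a j ≤ a (i + 1) - a i := by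
  induction j, hij using Nat.le_induction with
  | base => exact le_rfl
  | succ j _ ih => linarith [ha j (by omega), ih (by omega)]

lemma mul_le_sub_of_le_sub_succ {u v : ℕ} (huv : u ≤ v) {t : ℝ}
    (h : ∀ i ∈ Ico u v, t ≤ a (i + 1) - a i) : ((v : ℝ) - u) * t ≤ a v - a u := by
  have := card_nsmul_le_sum _ _ _ h
  rwa [sum_Ico_sub a huv, Nat.card_Ico, nsmul_eq_mul, Nat.cast_sub huv] at this

lemma sub_le_mul_of_sub_succ_le {u v : ℕ} (huv : u ≤ v) {t : ℝ}
    (h : ∀ i ∈ Ico u v, a (i + 1) - a i ≤ t) : a v - a u ≤ ((v : ℝ) - u) * t := by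
  have := sum_le_card_nsmul _ _ _ h
  rwa [sum_Ico_sub a huv, Nat.card_Ico, nsmul_eq_mul, Nat.cast_sub huv] at this

/-- Three-chord lemma: the increments on `[u, v)` all dominate `a (v + 1) - a v`, which dominates
those on `[v, w)`. -/
lemma mul_sub_le_mul_sub_of_concave (ha : ∀ i, i + 2 ≤ k → a i + a (i + 2) ≤ 2 * a (i + 1))
    {u v w : ℕ} (huv : u ≤ v) (hvw : v ≤ w) (hwk : w ≤ k) :
    ((v : ℝ) - u) * (a w - a v) ≤ ((w : ℝ) - v) * (a v - a u) := by
  obtain rfl | hvw := eq_or_lt_of_le hvw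
  · simp
  have hleft := mul_le_sub_of_le_sub_succ huv (t := a (v + 1) - a v) fun i hi =>
    sub_succ_le_sub_succ_of_concave ha (mem_Ico.1 hi).2.le (by omega)
  have hright := sub_le_mul_of_sub_succ_le hvw.le (t := a (v + 1) - a v) fun i hi =>
    sub_succ_le_sub_succ_of_concave ha (mem_Ico.1 hi).1 (by have := (mem_Ico.1 hi).2; omega)
  have hu : (0 : ℝ) ≤ v - u := sub_nonneg.2 (by exact_mod_cast huv)
  have hw : (0 : ℝ) ≤ w - v := sub_nonneg.2 (by exact_mod_cast hvw.le)
  nlinarith [mul_le_mul_of_nonneg_left hleft hw, mul_le_mul_of_nonneg_left hright hu]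

lemma secant_le_secant_of_concave (ha : ∀ i, i + 2 ≤ k → a i + a (i + 2) ≤ 2 * a (i + 1))
    {l r s : ℕ} (hlk : l < k) (hsr : s < r) (hrk : r ≤ k) (hsl : s ≤ l) :
    (a k - a l) / ((k : ℝ) - l) ≤ (a r - a s) / ((r : ℝ) - s) := by
  have hkl : (0 : ℝ) < k - l := sub_pos.2 (by exact_mod_cast hlk)
  have hks : (0 : ℝ) < k - s := sub_pos.2 (by exact_mod_cast hsl.trans_lt hlk)
  have hrs : (0 : ℝ) < r - s := sub_pos.2 (by exact_mod_cast hsr)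
  calc (a k - a l) / ((k : ℝ) - l) ≤ (a k - a s) / ((k : ℝ) - s) := by
        rw [div_le_div_iff₀ hkl hks]
        linarith [mul_sub_le_mul_sub_of_concave ha hsl hlk.le le_rfl]
    _ ≤ (a r - a s) / ((r : ℝ) - s) := by
        rw [div_le_div_iff₀ hks hrs]
        linarith [mul_sub_le_mul_sub_of_concave ha hsr.le hrk le_rfl]

end ConcaveSequence

open Real in
lemma rpow_div_le_rpow_div_of_log_concave {p : ℕ → ℝ} {k l r s : ℕ} (hp : ∀ j ≤ k, 0 < p j)
    (hlc : ∀ j, j + 2 ≤ k → p j * p (j + 2) ≤ p (j + 1) ^ 2)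
    (hlk : l < k) (hsr : s < r) (hrk : r ≤ k) (hsl : s ≤ l) :
    (p k / p l) ^ (1 / ((k : ℝ) - l)) ≤ (p r / p s) ^ (1 / ((r : ℝ) - s)) := by
  have hconc : ∀ i, i + 2 ≤ k → log (p i) + log (p (i + 2)) ≤ 2 * log (p (i + 1)) := by
    intro i hi
    have h := log_le_log (mul_pos (hp i (by omega)) (hp (i + 2) hi)) (hlc i hi)
    rwa [log_mul (hp i (by omega)).ne' (hp (i + 2) hi).ne', log_pow, Nat.cast_ofNat] at h
  rw [rpow_def_of_pos (div_pos (hp k le_rfl) (hp l hlk.le)),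
    rpow_def_of_pos (div_pos (hp r hrk) (hp s (by omega))), exp_le_exp,
    log_div (hp k le_rfl).ne' (hp l hlk.le).ne', log_div (hp r hrk).ne' (hp s (by omega)).ne',
    mul_one_div, mul_one_div]
  exact secant_le_secant_of_concave hconc hlk hsr hrk hsl

lemma esymm_eq_multiset_esymm (n k : ℕ) (x : Fin n → ℝ) :
    esymm n k x = (univ.val.map x).esymm k :=
  (esymm_map_val x univ k).symm

lemma esymm_div_choose_eq_esymmMean (n k : ℕ) (x : Fin n → ℝ) :
    esymm n k x / n.choose k = (univ.val.map x).esymmMean k := by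
  rw [Multiset.esymmMean, esymm_eq_multiset_esymm, Multiset.card_map, card_val, card_univ,
    Fintype.card_fin]

/-- Maclaurin-type quotient inequality on Gamma_k. -/
theorem maclaurin_quotient (n k l r s : ℕ) (hlk : l < k) (hsr : s < r)
    (hkn : k ≤ n) (hrk : r ≤ k) (hsl : s ≤ l)
    (lam : Fin n → ℝ) (hlam : lam ∈ Gamma n k) :
    ((esymm n k lam / (n.choose k : ℝ)) / (esymm n l lam / (n.choose l : ℝ)))
        ^ ((1 : ℝ) / ((k : ℝ) - (l : ℝ))) ≤
      ((esymm n r lam / (n.choose r : ℝ)) / (esymm n s lam / (n.choose s : ℝ)))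
        ^ ((1 : ℝ) / ((r : ℝ) - (s : ℝ))) := by
  simp only [esymm_div_choose_eq_esymmMean]
  refine rpow_div_le_rpow_div_of_log_concave (fun j hj => ?_)
    (fun j _ => Multiset.esymmMean_mul_esymmMean_le_sq _ j) hlk hsr hrk hsl
  rw [← esymm_div_choose_eq_esymmMean]
  rcases Nat.eq_zero_or_pos j with rfl | hj₀
  · simp [esymm_eq_multiset_esymm]
  · exact div_pos (hlam j hj₀ hj) (by exact_mod_cast Nat.choose_pos (hj.trans hkn))
end

section
/- Let u : M → ℝ be a C² function on a closed Riemannian manifold attaining its maximum at x₁. If u solves (2n−2)/(n−2)·Δu + (n−1)|∇u|² + 1 = exp(2u) on M, then u ≡ 0. -/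
/-- Uniqueness for (2n-2)/(n-2) Lap u + (n-1)|grad u|^2 + 1 = exp(2u) on a closed manifold:
M is a nonempty compact space, lap and gradsq play the roles of the Laplacian and squared
gradient norm of u, with the maximum-principle facts at extrema. Then u is identically 0. -/
theorem solution_is_zero {M : Type*} [TopologicalSpace M] [CompactSpace M] [Nonempty M]
    (n : ℕ) (hn : 3 ≤ n) (u lap gradsq : M → ℝ) (hu : Continuous u)
    (hmax : ∀ x, IsMaxOn u Set.univ x → lap x ≤ 0 ∧ gradsq x = 0)
    (hmin : ∀ x, IsMinOn u Set.univ x → 0 ≤ lap x ∧ gradsq x = 0)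
    (heq : ∀ x, (2 * (n : ℝ) - 2) / ((n : ℝ) - 2) * lap x + ((n : ℝ) - 1) * gradsq x + 1 =
      Real.exp (2 * u x)) :
    ∀ x, u x = 0 := by
  have hn' : (3 : ℝ) ≤ (n : ℝ) := by exact_mod_cast hn
  have hc : 0 < (2 * (n : ℝ) - 2) / ((n : ℝ) - 2) := by
    apply div_pos <;> linarith
  obtain ⟨x₁, -, hx₁⟩ := isCompact_univ.exists_isMaxOn Set.univ_nonempty hu.continuousOn
  obtain ⟨x₀, -, hx₀⟩ := isCompact_univ.exists_isMinOn Set.univ_nonempty hu.continuousOn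
  obtain ⟨hl1, hg1⟩ := hmax x₁ hx₁
  obtain ⟨hl0, hg0⟩ := hmin x₀ hx₀
  have e1 := heq x₁
  have e0 := heq x₀
  rw [hg1] at e1
  rw [hg0] at e0
  have hmax1 : Real.exp (2 * u x₁) ≤ 1 := by nlinarith [mul_nonpos_of_nonneg_of_nonpos hc.le hl1]
  have hmin1 : 1 ≤ Real.exp (2 * u x₀) := by nlinarith [mul_nonneg hc.le hl0]
  have hu1 : u x₁ ≤ 0 := by
    have := Real.exp_le_one_iff.mp hmax1
    linarith
  have hu0 : 0 ≤ u x₀ := by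
    rcases le_or_gt 0 (u x₀) with h | h
    · exact h
    · exfalso
      have : Real.exp (2 * u x₀) < 1 := by
        rw [Real.exp_lt_one_iff]; linarith
      linarith
  intro x
  have h1 : u x ≤ u x₁ := hx₁ (Set.mem_univ x)
  have h0 : u x₀ ≤ u x := hx₀ (Set.mem_univ x)
  linarith
end

section
/- For μ ∈ Γ_{k−1}, Σ_i σ_{k−1}(μ|i)/σ_{k−1}(μ) − σ_k(μ)·Σ_i σ_{k−2}(μ|i)/σ_{k−1}(μ)² = ((n−k+1)σ_{k−1}(μ)² − (n−k+2)σ_k(μ)σ_{k−2}(μ))/σ_{k−1}(μ)² ≥ (n−k+1)/k, i.e., the trace of the derivative matrix of σ_k/σ_{k−1} is bounded below by (n−k+1)/k. -/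
/-
The identity Σ_i σ_j(μ|i) = (n - j) σ_j(μ) turns the trace into the stated quotient, and the
lower bound becomes Newton's inequality k (n-k+2) σ_k σ_{k-2} ≤ (k-1)(n-k+1) σ_{k-1}².

Newton's inequality holds for the coefficients of any real polynomial with only real roots, here
∏ (X + μ_i). By Rolle's theorem differentiation preserves real-rootedness, and so does reversing
the coefficients. Differentiating u times, reversing, and differentiating t times turns three
consecutive coefficients c_u, c_{u+1}, c_{u+2} into weighted coefficients of a real-rooted
quadratic, whose discriminant is nonnegative.
-/

open Finset

/-- The k-th elementary symmetric polynomial of x with the i-th entry deleted. -/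
noncomputable def esymmDel (n k : ℕ) (x : Fin n → ℝ) (i : Fin n) : ℝ :=
  ∑ s ∈ (Finset.univ.erase i).powersetCard k, ∏ j ∈ s, x j

open scoped Nat

theorem cast_add_one_descFactorial (n : ℕ) : ((n + 1).descFactorial n : ℝ) = (n + 1) * n ! := by
  have := Nat.succ_descFactorial n n
  rw [Nat.add_sub_cancel_left, one_mul, Nat.descFactorial_self] at this
  exact_mod_cast this

theorem cast_add_two_descFactorial (n : ℕ) :
    ((n + 2).descFactorial n : ℝ) = (n + 2) * (n + 1) * n ! / 2 := by
  have := Nat.succ_descFactorial (n + 1) n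
  rw [show n + 1 + 1 - n = 2 by omega] at this
  have hcast : (2 : ℝ) * (n + 2).descFactorial n = (n + 2) * (n + 1).descFactorial n := by
    exact_mod_cast this
  rw [cast_add_one_descFactorial] at hcast
  linear_combination hcast / 2

namespace Polynomial

theorem Splits.derivative {p : ℝ[X]} (hp : p.Splits) : (Polynomial.derivative p).Splits := by
  rw [splits_iff_card_roots] at hp ⊢
  have := card_roots_le_derivative p
  have := card_roots' (Polynomial.derivative p)
  have := natDegree_derivative_le p
  omega

theorem Splits.iterate_derivative {p : ℝ[X]} (hp : p.Splits) (k : ℕ) :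
    (Polynomial.derivative^[k] p).Splits := by
  induction k with
  | zero => exact hp
  | succ k ih => rw [Function.iterate_succ_apply']; exact ih.derivative

section Field

variable {K : Type*} [Field K]

theorem Splits.reverse {p : K[X]} (hp : p.Splits) : p.reverse.Splits := by
  induction hp using Submonoid.closure_induction with
  | mem f hf =>
    refine .of_natDegree_le_one ((reverse_natDegree_le f).trans ?_)
    rcases hf with ⟨a, rfl⟩ | ⟨a, rfl⟩
    · simp
    · exact (natDegree_X_add_C a).le
  | one => rw [← C_1, reverse_C]; exact .C 1
  | mul f g _ _ hf hg => rw [reverse_mul_of_domain]; exact hf.mul hg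

theorem reflect_eq_reverse_mul_X_pow {p : K[X]} {N : ℕ} (hN : p.natDegree ≤ N) :
    reflect N p = p.reverse * X ^ (N - p.natDegree) := by
  have := reflect_mul p 1 le_rfl (natDegree_one.trans_le (Nat.zero_le (N - p.natDegree)))
  rwa [mul_one, Nat.add_sub_cancel' hN, reflect_one] at this

theorem Splits.reflect {p : K[X]} (hp : p.Splits) {N : ℕ} (hN : p.natDegree ≤ N) :
    (reflect N p).Splits := by
  rw [reflect_eq_reverse_mul_X_pow hN]
  exact hp.reverse.mul (.X_pow _)

end Field

theorem Splits.four_mul_coeff_zero_mul_coeff_two_le {R : Type*} [Field R] [LinearOrder R]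
    [IsStrictOrderedRing R] {p : R[X]} (hp : p.Splits) (hd : p.natDegree ≤ 2) :
    4 * p.coeff 0 * p.coeff 2 ≤ p.coeff 1 ^ 2 := by
  by_cases h2 : p.coeff 2 = 0
  · simpa [h2] using sq_nonneg (p.coeff 1)
  have hdeg : p.natDegree = 2 := le_antisymm hd (le_natDegree_of_ne_zero h2)
  obtain ⟨x, hx⟩ :=
    hp.exists_eval_eq_zero fun h ↦ by simp [natDegree_eq_of_degree_eq_some h] at hdeg
  rw [eval_eq_sum_range, hdeg] at hx
  simp only [Finset.sum_range_succ, Finset.sum_range_zero] at hx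
  have hdisc := discrim_eq_sq_of_quadratic_eq_zero (a := p.coeff 2) (b := p.coeff 1)
    (c := p.coeff 0) (x := x) (by linear_combination hx)
  rw [discrim] at hdisc
  linarith [sq_nonneg (2 * p.coeff 2 * x + p.coeff 1)]

theorem Splits.newton_inequality {p : ℝ[X]} (hp : p.Splits) {u t : ℕ}
    (hd : p.natDegree ≤ u + t + 2) :
    ((u : ℝ) + 2) * ((t : ℝ) + 2) * (p.coeff u * p.coeff (u + 2)) ≤
      ((u : ℝ) + 1) * ((t : ℝ) + 1) * p.coeff (u + 1) ^ 2 := by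
  have hqdeg : (Polynomial.derivative^[u] p).natDegree ≤ t + 2 := by
    have := natDegree_iterate_derivative p u; omega
  set s := Polynomial.derivative^[t] (Polynomial.reflect (t + 2) (Polynomial.derivative^[u] p))
  have hs : s.Splits := ((hp.iterate_derivative u).reflect hqdeg).iterate_derivative t
  have hsdeg : s.natDegree ≤ 2 := by
    have h1 : s.natDegree ≤ _ := natDegree_iterate_derivative _ t
    have h2 := natDegree_reflect_le (N := t + 2) (p := Polynomial.derivative^[u] p)
    omega
  have hcoeff : ∀ j ≤ 2, s.coeff j =
      (t + j).descFactorial t * (u + (2 - j)).descFactorial u * p.coeff (u + (2 - j)) := by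
    intro j hj
    rw [coeff_iterate_derivative, coeff_reflect, revAt_le (by omega : j + t ≤ t + 2),
      coeff_iterate_derivative, nsmul_eq_mul, nsmul_eq_mul,
      show t + 2 - (j + t) + u = u + (2 - j) by omega, add_comm j t, mul_assoc]
  have hquad := hs.four_mul_coeff_zero_mul_coeff_two_le hsdeg
  rw [hcoeff 0 (by norm_num), hcoeff 1 (by norm_num), hcoeff 2 (by norm_num)] at hquad
  simp only [add_zero, Nat.descFactorial_self, tsub_zero, cast_add_two_descFactorial, tsub_self,
    cast_add_one_descFactorial, Nat.add_one_sub_one] at hquad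
  have hpos : 0 < ((u : ℝ) + 1) * ((t : ℝ) + 1) * ((t ! : ℝ) * u !) ^ 2 := by positivity
  refine le_of_mul_le_mul_right ?_ hpos
  linear_combination hquad

end Polynomial

open Polynomial

theorem coeff_prod_X_add_C_eq_esymm {n : ℕ} (μ : Fin n → ℝ) {j : ℕ} (hj : j ≤ n) :
    (∏ i, (X + C (μ i))).coeff j = esymm n (n - j) μ := by
  rw [Finset.prod_X_add_C_coeff _ _ (by simpa using hj), esymm, card_univ, Fintype.card_fin]

theorem esymm_mul_esymm_le {n j : ℕ} (hj : j + 2 ≤ n) (μ : Fin n → ℝ) :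
    ((j : ℝ) + 2) * ((n : ℝ) - j) * (esymm n j μ * esymm n (j + 2) μ) ≤
      ((j : ℝ) + 1) * ((n : ℝ) - j - 1) * esymm n (j + 1) μ ^ 2 := by
  have hdeg : (∏ i, (X + C (μ i))).natDegree ≤ (n - (j + 2)) + j + 2 :=
    (natDegree_prod_le _ _).trans (by simp; omega)
  have := (Splits.prod fun i _ ↦ Splits.X_add_C (μ i)).newton_inequality hdeg
  rw [coeff_prod_X_add_C_eq_esymm μ (by omega), coeff_prod_X_add_C_eq_esymm μ (by omega),
    coeff_prod_X_add_C_eq_esymm μ (by omega), show n - (n - (j + 2)) = j + 2 by omega,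
    show n - (n - (j + 2) + 1) = j + 1 by omega, show n - (n - (j + 2) + 2) = j by omega,
    Nat.cast_sub hj] at this
  push_cast at this
  linear_combination this

theorem sum_esymmDel (n j : ℕ) (μ : Fin n → ℝ) :
    ∑ i, esymmDel n j μ i = ((n - j : ℕ) : ℝ) * esymm n j μ := by
  have hfilter : ∀ i : Fin n, (univ.erase i).powersetCard j =
      (univ.powersetCard j).filter (fun s ↦ i ∉ s) := by
    intro i
    ext s
    simp only [mem_powersetCard, mem_filter, subset_erase, subset_univ, true_and]
    tauto
  simp only [esymmDel, hfilter, sum_filter]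
  rw [sum_comm, esymm, mul_sum]
  refine sum_congr rfl fun s hs ↦ ?_
  rw [← sum_filter, sum_const, nsmul_eq_mul, filter_notMem_eq_sdiff, ← compl_eq_univ_sdiff,
    card_compl, Fintype.card_fin, (mem_powersetCard.1 hs).2]

/-- Trace lower bound for the derivative matrix of sigma_k/sigma_{k-1} on Gamma_{k-1}. -/
theorem trace_lower_bound (n k : ℕ) (hk : 2 ≤ k) (hkn : k ≤ n)
    (μ : Fin n → ℝ) (hμ : μ ∈ Gamma n (k - 1)) :
    (∑ i, esymmDel n (k - 1) μ i) / esymm n (k - 1) μ -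
        esymm n k μ * (∑ i, esymmDel n (k - 2) μ i) / (esymm n (k - 1) μ) ^ 2 =
      (((n : ℝ) - (k : ℝ) + 1) * (esymm n (k - 1) μ) ^ 2 -
          ((n : ℝ) - (k : ℝ) + 2) * esymm n k μ * esymm n (k - 2) μ) /
        (esymm n (k - 1) μ) ^ 2 ∧
    ((n : ℝ) - (k : ℝ) + 1) / (k : ℝ) ≤
      (∑ i, esymmDel n (k - 1) μ i) / esymm n (k - 1) μ -
        esymm n k μ * (∑ i, esymmDel n (k - 2) μ i) / (esymm n (k - 1) μ) ^ 2 := by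
  obtain ⟨j, rfl⟩ : ∃ j, k = j + 2 := ⟨k - 2, by omega⟩
  have hσ : 0 < esymm n (j + 1) μ := hμ (j + 1) (by omega) (by omega)
  rw [show j + 2 - 1 = j + 1 by omega, Nat.add_sub_cancel]
  have hnewton := esymm_mul_esymm_le hkn μ
  rw [sum_esymmDel, sum_esymmDel, Nat.cast_sub (by omega), Nat.cast_sub (by omega)]
  refine (fun h ↦ ⟨h, h ▸ ?_⟩) (by field_simp; push_cast; ring)
  rw [div_le_div_iff₀ (by positivity) (by positivity)]
  push_cast
  linear_combination hnewton
end
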